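/- Let A be an algebra in the variety R. Then for all x,y,z,t in A, (z(xy))t = (z(yx))t, i.e., x R_y V_{z,t} = y R_x V_{z,t}. -/
import Mathlib


theorem stmt {F A : Type*} [Field F] [NonUnitalNonAssocRing A] [Module F A]
    [SMulCommClass F A A] [IsScalarTower F A A]
    (h1 : ∀ a b c : A, (a * b - b * a) * c - c * (a * b - b * a) = 0)
    (h2 : ∀ a b : A, (a * b) * a = 0)
    (h3 : ∀ a b c d : A, (a * b) * (c * d) = 0) :
    ∀ x y z t : A, (z * (x * y)) * t = (z * (y * x)) * t := by
  have lin : ∀ a b c : A, (a * b) * c + (c * b) * a = 0 := by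
    intro a b c
    have e := h2 (a + c) b
    rw [add_mul, add_mul, mul_add, mul_add, h2, h2] at e
    abel_nf at e ⊢
    exact e
  have cube : ∀ a b c d : A, ((a * b) * c) * d = 0 := by
    intro a b c d
    have e := lin (a * b) c d
    rw [h3] at e
    simpa using e
  intro x y z t
  have hz := h1 x y z
  rw [sub_mul, mul_sub] at hz
  have e1 : z * (x * y) - z * (y * x) = (x * y) * z - (y * x) * z :=
    (sub_eq_zero.mp hz).symm
  have e2 : (z * (x * y)) * t - (z * (y * x)) * t = ((x * y) * z) * t - ((y * x) * z) * t := by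
    rw [← sub_mul, ← sub_mul, e1]
  rw [cube, cube, sub_zero] at e2
  exact sub_eq_zero.mp e2
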